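/- arXiv:1711.00419 — 2 statements merged into one kernel-verified Lean document; each statement's English description precedes it below -/
import Mathlib

section
/- Let q : (0,∞) → ℝ be continuous and define L_m h := h'' + (1/R)h' − (m²/R²)h − q(R)h for integers m ≥ 0. Assume the mode-one quadratic form is nonpositive: ∫₀^∞ (L_1 g)(R)·g(R)·R dR ≤ 0 for every twice continuously differentiable g with compact support contained in (0,∞). Then for every integer m ≥ 2 and every twice continuously differentiable f with compact support contained in (0,∞) that is not identically zero, ∫₀^∞ (L_m f)(R)·f(R)·R dR < 0. -/
/-!
Pointwise, `(L_m f) f R = (L_1 f) f R - (m² - 1) f² / R` on `(0,∞)`: the modes differ only in the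
potential `m²/R²`. Integrating, the mode-`m` form is the mode-one form, which is `≤ 0`, minus
`(m² - 1) ∫ f²/R dR`, which is strictly positive for `m ≥ 2` and `f ≠ 0`.
-/

/-- The azimuthal mode-`m` operator `L_m h = h'' + h'/R − (m²/R²) h − q h`. -/
noncomputable def azimuthalOp (q : ℝ → ℝ) (m : ℕ) (f : ℝ → ℝ) (R : ℝ) : ℝ :=
  deriv (deriv f) R + (1 / R) * deriv f R - ((m : ℝ) ^ 2 / R ^ 2) * f R - q R * f R

open MeasureTheory Set Function

section PositiveIntegral

variable {X : Type*} [TopologicalSpace X] [MeasurableSpace X] [OpensMeasurableSpace X]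
  {μ : Measure X} {U K : Set X} {g : X → ℝ}

theorem ContinuousOn.integrableOn_of_support_subset_isCompact [T2Space X]
    [IsFiniteMeasureOnCompacts μ] (hg : ContinuousOn g U) (hU : MeasurableSet U)
    (hK : IsCompact K) (hKU : K ⊆ U) (hgK : support g ⊆ K) : IntegrableOn g U μ :=
  ((hg.mono hKU).integrableOn_compact hK).of_forall_sdiff_eq_zero hU
    fun _ hx => notMem_support.mp fun h => hx.2 (hgK h)

theorem ContinuousOn.setIntegral_pos_of_nonneg_of_ne_zero [μ.IsOpenPosMeasure] {x : X}
    (hg : ContinuousOn g U) (hU : IsOpen U) (hgi : IntegrableOn g U μ)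
    (hg_nonneg : ∀ y ∈ U, 0 ≤ g y) (hxU : x ∈ U) (hgx : g x ≠ 0) : 0 < ∫ y in U, g y ∂μ := by
  rw [setIntegral_pos_iff_support_of_nonneg_ae
    ((ae_restrict_iff' hU.measurableSet).mpr (Filter.Eventually.of_forall hg_nonneg)) hgi]
  have hopen : IsOpen (support g ∩ U) := by
    rw [inter_comm]
    exact hg.isOpen_inter_preimage hU isOpen_compl_singleton
  exact hopen.measure_pos μ ⟨x, hgx, hxU⟩

end PositiveIntegral

theorem azimuthalOp_mul_mul_eq (q f : ℝ → ℝ) (m n : ℕ) {R : ℝ} (hR : R ≠ 0) :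
    azimuthalOp q m f R * f R * R
      = azimuthalOp q n f R * f R * R - ((m : ℝ) ^ 2 - (n : ℝ) ^ 2) * (f R ^ 2 / R) := by
  simp only [azimuthalOp]
  field_simp
  ring

section Azimuthal

variable {q f : ℝ → ℝ}

theorem continuousOn_azimuthalOp (m : ℕ) (hq : ContinuousOn q (Ioi 0)) (hf : ContDiff ℝ 2 f) :
    ContinuousOn (azimuthalOp q m f) (Ioi 0) := by
  have hf' : Continuous (deriv f) := hf.continuous_deriv (by norm_num)
  have hf'' : Continuous (deriv (deriv f)) := (hf.deriv' (n := 1)).continuous_deriv le_rfl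
  unfold azimuthalOp
  refine ((hf''.continuousOn.add ?_).sub ?_).sub (hq.mul hf.continuous.continuousOn)
  · exact (continuousOn_const.div continuousOn_id fun R hR => ne_of_gt hR).mul hf'.continuousOn
  · exact (continuousOn_const.div (continuousOn_id.pow 2) fun R hR =>
      pow_ne_zero 2 (ne_of_gt hR)).mul hf.continuous.continuousOn

theorem integrableOn_azimuthalOp_mul_mul (m : ℕ) (hq : ContinuousOn q (Ioi 0))
    (hf : ContDiff ℝ 2 f) (hcs : HasCompactSupport f) (hsupp : tsupport f ⊆ Ioi 0) :
    IntegrableOn (fun R => azimuthalOp q m f R * f R * R) (Ioi 0) :=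
  ((continuousOn_azimuthalOp m hq hf).mul hf.continuous.continuousOn |>.mul continuousOn_id)
    |>.integrableOn_of_support_subset_isCompact measurableSet_Ioi hcs hsupp
      fun R hR => subset_tsupport f fun h => hR (by simp [h])

theorem integrableOn_sq_div_self (hf : Continuous f) (hcs : HasCompactSupport f)
    (hsupp : tsupport f ⊆ Ioi 0) :
    IntegrableOn (fun R => f R ^ 2 / R) (Ioi 0) :=
  ((hf.pow 2).continuousOn.div continuousOn_id fun R hR => ne_of_gt hR)
    |>.integrableOn_of_support_subset_isCompact measurableSet_Ioi hcs hsupp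
      fun R hR => subset_tsupport f fun h => hR (by simp [h])

theorem setIntegral_sq_div_self_pos (hf : Continuous f) (hcs : HasCompactSupport f)
    (hsupp : tsupport f ⊆ Ioi 0) (hne : f ≠ 0) : 0 < ∫ R in Ioi (0 : ℝ), f R ^ 2 / R := by
  obtain ⟨x, hx⟩ : ∃ x, f x ≠ 0 := by simpa [funext_iff] using hne
  have hx0 : 0 < x := hsupp (subset_tsupport f hx)
  exact ((hf.pow 2).continuousOn.div continuousOn_id fun R hR => ne_of_gt hR)
    |>.setIntegral_pos_of_nonneg_of_ne_zero isOpen_Ioi (integrableOn_sq_div_self hf hcs hsupp)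
      (fun R hR => div_nonneg (sq_nonneg _) (le_of_lt hR)) hx0
      (div_ne_zero (pow_ne_zero 2 hx) hx0.ne')

end Azimuthal

/-- If the mode-one quadratic form is nonpositive on C² functions of compact support
in `(0,∞)`, then for every `m ≥ 2` the mode-`m` quadratic form is strictly negative
on every such nonzero function. -/
theorem azimuthal_mode_m_negative
    (q : ℝ → ℝ) (hq : ContinuousOn q (Set.Ioi 0))
    (h1 : ∀ g : ℝ → ℝ, ContDiff ℝ 2 g → HasCompactSupport g →
      tsupport g ⊆ Set.Ioi 0 →
      (∫ R in Set.Ioi (0 : ℝ), azimuthalOp q 1 g R * g R * R) ≤ 0) :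
    ∀ m : ℕ, 2 ≤ m → ∀ f : ℝ → ℝ, ContDiff ℝ 2 f → HasCompactSupport f →
      tsupport f ⊆ Set.Ioi 0 → f ≠ 0 →
      (∫ R in Set.Ioi (0 : ℝ), azimuthalOp q m f R * f R * R) < 0 := by
  intro m hm f hf hcs hsupp hne
  have hsplit : ∫ R in Ioi (0 : ℝ), azimuthalOp q m f R * f R * R
      = (∫ R in Ioi (0 : ℝ), azimuthalOp q 1 f R * f R * R)
        - ((m : ℝ) ^ 2 - 1) * ∫ R in Ioi (0 : ℝ), f R ^ 2 / R := by
    rw [setIntegral_congr_fun measurableSet_Ioi fun R hR =>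
        azimuthalOp_mul_mul_eq q f m 1 (ne_of_gt hR),
      integral_sub (integrableOn_azimuthalOp_mul_mul 1 hq hf hcs hsupp)
        ((integrableOn_sq_div_self hf.continuous hcs hsupp).const_mul _),
      integral_const_mul, Nat.cast_one, one_pow]
  have hm2 : (0 : ℝ) < (m : ℝ) ^ 2 - 1 := by
    have : (2 : ℝ) ≤ m := by exact_mod_cast hm
    nlinarith
  have hgap := mul_pos hm2 (setIntegral_sq_div_self_pos hf.continuous hcs hsupp hne)
  rw [hsplit]
  linarith [h1 f hf hcs hsupp]
end

section
/- Let ν_b, ν_f > 0, μ_b*, μ_f* ∈ ℝ, α, |Ω| > 0, ε > 0, and positive integers N_b, N_f. Suppose μ : [0,T) → ℝ and Rᵢ, rⱼ : [0,T) → (0,∞) (i = 1,…,N_b, j = 1,…,N_f) are differentiable and satisfy Ṙᵢ = 2ν_b(μ − μ_b*)/Rᵢ, ṙⱼ = ν_f(μ − μ_f*)/rⱼ, and μ̇ = −(α²/|Ω|)·(16π ν_b(μ − μ_b*)·N_b + 2επ ν_f(μ − μ_f*)·Σⱼ 1/rⱼ). Then the quantity E(τ) := μ(τ) + (α²/|Ω|)·(4π·Σᵢ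 Rᵢ(τ)² + 2πε·Σⱼ rⱼ(τ)) is constant on [0,T). -/
open scoped ENNReal BigOperators

/-!
Along the flow every sphere gains area at the rate `d(Rᵢ²)/dτ = 2 Rᵢ Ṙᵢ = 4ν_b(μ - μ_b*)`,
independently of its radius, and every hoop gains length at the rate `ν_f(μ - μ_f*)/rⱼ`.
Weighted by `4π` and `2πε`, these rates are exactly what the equation for `μ̇` removes from the
far field, so the total mass `E` has zero derivative at every time of `[0, T)`; an interval is
convex, hence `E` is constant there.
-/

theorem Convex.eq_of_forall_hasDerivAt_zero {s : Set ℝ} (hs : Convex ℝ s) {f : ℝ → ℝ}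
    (hf : ∀ x ∈ s, HasDerivAt f 0 x) {x y : ℝ} (hx : x ∈ s) (hy : y ∈ s) : f x = f y := by
  have h := hs.norm_image_sub_le_of_norm_hasDerivWithin_le
    (fun z hz => (hf z hz).hasDerivWithinAt) (fun _ _ => le_of_eq norm_zero) hy hx
  rw [zero_mul, norm_le_zero_iff, sub_eq_zero] at h
  exact h

theorem convex_setOf_nonneg_and_ofReal_lt (T : ℝ≥0∞) :
    Convex ℝ {τ : ℝ | 0 ≤ τ ∧ ENNReal.ofReal τ < T} :=
  (convex_Ici 0).inter (Set.ordConnected_Iio.preimage_ennreal_ofReal).convex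

theorem HasDerivAt.sq_of_eq_div {R : ℝ → ℝ} {c x : ℝ} (hR : HasDerivAt R (c / R x) x)
    (hx : R x ≠ 0) : HasDerivAt (fun t => R t ^ 2) (2 * c) x :=
  (hR.fun_pow 2).congr_deriv (by field_simp; ring)

theorem hybrid_morphology_mass_conservation_general
    (νb νf μbs μfs α vol ε : ℝ)
    (Nb Nf : ℕ)
    (T : ℝ≥0∞)
    (μ : ℝ → ℝ) (Rf : Fin Nb → ℝ → ℝ) (rf : Fin Nf → ℝ → ℝ)
    (hRpos : ∀ (i : Fin Nb) (τ : ℝ), 0 ≤ τ → ENNReal.ofReal τ < T → 0 < Rf i τ)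
    (hRdot : ∀ (i : Fin Nb) (τ : ℝ), 0 ≤ τ → ENNReal.ofReal τ < T →
      HasDerivAt (Rf i) (2 * νb * (μ τ - μbs) / Rf i τ) τ)
    (hrdot : ∀ (j : Fin Nf) (τ : ℝ), 0 ≤ τ → ENNReal.ofReal τ < T →
      HasDerivAt (rf j) (νf * (μ τ - μfs) / rf j τ) τ)
    (hμdot : ∀ τ : ℝ, 0 ≤ τ → ENNReal.ofReal τ < T →
      HasDerivAt μ (-(α ^ 2 / vol) *
        (16 * Real.pi * νb * (μ τ - μbs) * (Nb : ℝ)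
          + 2 * ε * Real.pi * νf * (μ τ - μfs) * ∑ j, 1 / rf j τ)) τ) :
    ∀ τ₁ τ₂ : ℝ, 0 ≤ τ₁ → ENNReal.ofReal τ₁ < T →
      0 ≤ τ₂ → ENNReal.ofReal τ₂ < T →
      μ τ₁ + (α ^ 2 / vol) *
          (4 * Real.pi * ∑ i, Rf i τ₁ ^ 2 + 2 * Real.pi * ε * ∑ j, rf j τ₁)
        = μ τ₂ + (α ^ 2 / vol) *
          (4 * Real.pi * ∑ i, Rf i τ₂ ^ 2 + 2 * Real.pi * ε * ∑ j, rf j τ₂) := by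
  intro τ₁ τ₂ h₁ hT₁ h₂ hT₂
  refine (convex_setOf_nonneg_and_ofReal_lt T).eq_of_forall_hasDerivAt_zero
    (f := fun τ => μ τ + (α ^ 2 / vol) *
      (4 * Real.pi * ∑ i, Rf i τ ^ 2 + 2 * Real.pi * ε * ∑ j, rf j τ))
    (fun τ ⟨hτ, hτT⟩ => ?_) ⟨h₁, hT₁⟩ ⟨h₂, hT₂⟩
  have harea : HasDerivAt (fun t => ∑ i, Rf i t ^ 2) (Nb * (2 * (2 * νb * (μ τ - μbs)))) τ := by
    simpa using HasDerivAt.fun_sum (u := Finset.univ) fun i _ =>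
      (hRdot i τ hτ hτT).sq_of_eq_div (hRpos i τ hτ hτT).ne'
  have hlength : HasDerivAt (fun t => ∑ j, rf j t) (νf * (μ τ - μfs) * ∑ j, 1 / rf j τ) τ :=
    (HasDerivAt.fun_sum fun j _ => hrdot j τ hτ hτT).congr_deriv
      (by simp only [Finset.mul_sum, mul_one_div])
  exact ((hμdot τ hτ hτT).add (((harea.const_mul (4 * Real.pi)).add
    (hlength.const_mul (2 * Real.pi * ε))).const_mul (α ^ 2 / vol))).congr_deriv (by ring)

/-- For the reduced dynamics of `N_b` spherical bilayers and `N_f` circular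
filament hoops coupled to the far-field chemical potential, the total mass
`E(τ) = μ(τ) + (α²/|Ω|)(4π Σᵢ Rᵢ² + 2πε Σⱼ rⱼ)` is conserved. -/
theorem hybrid_morphology_mass_conservation
    (νb νf μbs μfs α vol ε : ℝ)
    (hνb : 0 < νb) (hνf : 0 < νf) (hα : 0 < α) (hvol : 0 < vol) (hε : 0 < ε)
    (Nb Nf : ℕ) (hNb : 0 < Nb) (hNf : 0 < Nf)
    (T : ℝ≥0∞)
    (μ : ℝ → ℝ) (Rf : Fin Nb → ℝ → ℝ) (rf : Fin Nf → ℝ → ℝ)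
    (hRpos : ∀ (i : Fin Nb) (τ : ℝ), 0 ≤ τ → ENNReal.ofReal τ < T → 0 < Rf i τ)
    (hrpos : ∀ (j : Fin Nf) (τ : ℝ), 0 ≤ τ → ENNReal.ofReal τ < T → 0 < rf j τ)
    (hRdot : ∀ (i : Fin Nb) (τ : ℝ), 0 ≤ τ → ENNReal.ofReal τ < T →
      HasDerivAt (Rf i) (2 * νb * (μ τ - μbs) / Rf i τ) τ)
    (hrdot : ∀ (j : Fin Nf) (τ : ℝ), 0 ≤ τ → ENNReal.ofReal τ < T →
      HasDerivAt (rf j) (νf * (μ τ - μfs) / rf j τ) τ)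
    (hμdot : ∀ τ : ℝ, 0 ≤ τ → ENNReal.ofReal τ < T →
      HasDerivAt μ (-(α ^ 2 / vol) *
        (16 * Real.pi * νb * (μ τ - μbs) * (Nb : ℝ)
          + 2 * ε * Real.pi * νf * (μ τ - μfs) * ∑ j, 1 / rf j τ)) τ) :
    ∀ τ₁ τ₂ : ℝ, 0 ≤ τ₁ → ENNReal.ofReal τ₁ < T →
      0 ≤ τ₂ → ENNReal.ofReal τ₂ < T →
      μ τ₁ + (α ^ 2 / vol) *
          (4 * Real.pi * ∑ i, Rf i τ₁ ^ 2 + 2 * Real.pi * ε * ∑ j, rf j τ₁)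
        = μ τ₂ + (α ^ 2 / vol) *
          (4 * Real.pi * ∑ i, Rf i τ₂ ^ 2 + 2 * Real.pi * ε * ∑ j, rf j τ₂) :=
  hybrid_morphology_mass_conservation_general νb νf μbs μfs α vol ε Nb Nf T μ Rf rf hRpos hRdot
    hrdot hμdot
end
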